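/- arXiv:2101.03108 — 2 statements merged into one kernel-verified Lean document; each statement's English description precedes it below -/
import Mathlib

section
/- Let K be n×n symmetric positive definite and let i₁,…,i_q be a partition of {1,…,n} concatenating to (1,…,n). Then the following are equivalent: (a) K⁻¹[i_j, i_{j'}] = 0 for all j ≠ j'; (b) blockdiag((K⁻¹[i₁])⁻¹,…,(K⁻¹[i_q])⁻¹) = K; (c) K[i_j, i_{j'}] = 0 for all j ≠ j'. -/
open Matrix

/-- Submatrix of `M` with rows indexed by `i` and columns by `j` (as finsets). -/
noncomputable def blk {n : ℕ} (M : Matrix (Fin n) (Fin n) ℝ) (i j : Finset (Fin n)) :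
    Matrix {x // x ∈ i} {x // x ∈ j} ℝ :=
  M.submatrix Subtype.val Subtype.val

/-- The fold containing the points mapped to `j` by the fold-assignment function `g`. -/
def fold {n q : ℕ} (g : Fin n → Fin q) (j : Fin q) : Finset (Fin n) :=
  Finset.univ.filter (fun x => g x = j)

/-- The block-diagonal matrix `D = blockdiag((K⁻¹[i₁])⁻¹, …, (K⁻¹[i_q])⁻¹)`. -/
noncomputable def blockD {n q : ℕ} (K : Matrix (Fin n) (Fin n) ℝ) (g : Fin n → Fin q) :
    Matrix (Fin n) (Fin n) ℝ :=
  fun a b =>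
    if h : g a = g b then
      ((blk K⁻¹ (fold g (g a)) (fold g (g a)))⁻¹)
        ⟨a, by simp [fold]⟩ ⟨b, by simp [fold, h]⟩
    else 0

/-- Blockwise inverse of `M` itself (same shape as `blockD`, applied to `M`). -/
noncomputable def invD {n q : ℕ} (M : Matrix (Fin n) (Fin n) ℝ) (g : Fin n → Fin q) :
    Matrix (Fin n) (Fin n) ℝ :=
  fun a b =>
    if h : g a = g b then
      ((blk M (fold g (g a)) (fold g (g a)))⁻¹)
        ⟨a, by simp [fold]⟩ ⟨b, by simp [fold, h]⟩
    else 0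

lemma blockD_eq_invD {n q : ℕ} (K : Matrix (Fin n) (Fin n) ℝ) (g : Fin n → Fin q) :
    blockD K g = invD K⁻¹ g := rfl

lemma posDef_submatrix_inj {n : ℕ} {M : Matrix (Fin n) (Fin n) ℝ} (hM : M.PosDef)
    {m : Type*} [Fintype m] [DecidableEq m] (e : m → Fin n) (he : Function.Injective e) :
    (M.submatrix e e).PosDef := by
  rw [posDef_iff_dotProduct_mulVec]
  constructor
  · exact hM.1.submatrix e
  · intro x hx
    set y : Fin n → ℝ := Function.extend e x 0 with hy
    have hye : ∀ j, y (e j) = x j := fun j => he.extend_apply x 0 j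
    have key : ∀ c : Fin n → ℝ, (∑ i, y i * c i) = ∑ j, x j * c (e j) := by
      intro c
      have e1 : ∑ i ∈ Finset.univ.image e, (y i * c i) = ∑ i, y i * c i := by
        apply Finset.sum_subset (Finset.subset_univ _)
        intro i _ hi
        have hni : ¬ ∃ j, e j = i := fun ⟨j, hj⟩ =>
          hi (Finset.mem_image.mpr ⟨j, Finset.mem_univ _, hj⟩)
        rw [hy, Function.extend_apply' _ _ _ hni]
        simp
      rw [← e1, Finset.sum_image (fun a _ b _ h => he h)]
      exact Finset.sum_congr rfl fun j _ => by rw [hye]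
    have hyne : y ≠ 0 := by
      intro h
      apply hx
      funext j
      have := congrFun h (e j)
      rw [hye] at this
      exact this
    have hpos := hM.dotProduct_mulVec_pos hyne
    simp only [star, dotProduct, mulVec, id_eq] at hpos ⊢
    have heq : ∑ j, x j * ∑ k, M.submatrix e e j k * x k
        = ∑ i, y i * ∑ i', M i i' * y i' := by
      rw [key fun i => ∑ i', M i i' * y i']
      apply Finset.sum_congr rfl
      intro j _
      congr 1
      calc ∑ k, M.submatrix e e j k * x k
          = ∑ k, x k * M (e j) (e k) := Finset.sum_congr rfl fun k _ => mul_comm _ _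
        _ = ∑ i, y i * M (e j) i := (key _).symm
        _ = ∑ i, M (e j) i * y i := Finset.sum_congr rfl fun k _ => mul_comm _ _
    rw [heq]
    exact hpos

lemma blkinv_congr {n : ℕ} (M : Matrix (Fin n) (Fin n) ℝ) {i i' : Finset (Fin n)}
    (h : i = i') {a b : Fin n} (ha : a ∈ i) (ha' : a ∈ i') (hb : b ∈ i) (hb' : b ∈ i') :
    ((blk M i i)⁻¹) ⟨a, ha⟩ ⟨b, hb⟩ = ((blk M i' i')⁻¹) ⟨a, ha'⟩ ⟨b, hb'⟩ := by
  subst h; rfl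

lemma mem_fold {n q : ℕ} {g : Fin n → Fin q} {a : Fin n} {j : Fin q} :
    a ∈ fold g j ↔ g a = j := by simp [fold]

lemma inv_eq_invD {n q : ℕ} {M : Matrix (Fin n) (Fin n) ℝ} (hM : M.PosDef)
    (g : Fin n → Fin q) (hblk : ∀ a b, g a ≠ g b → M a b = 0) :
    M⁻¹ = invD M g := by
  apply inv_eq_right_inv
  ext a b
  set J := fold g (g b) with hJ
  have hb : b ∈ J := mem_fold.mpr rfl
  have hblkPD : (blk M J J).PosDef :=
    posDef_submatrix_inj hM Subtype.val Subtype.val_injective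
  have hmul : blk M J J * (blk M J J)⁻¹ = 1 :=
    mul_nonsing_inv _ (isUnit_iff_ne_zero.mpr hblkPD.det_pos.ne')
  rw [mul_apply]
  rw [← Finset.sum_subset (Finset.subset_univ J)
    (fun c _ hc => by
      rw [invD, dif_neg (fun h => hc (mem_fold.mpr h)), mul_zero])]
  by_cases hab : g a = g b
  · have ha : a ∈ J := mem_fold.mpr hab
    rw [← Finset.sum_attach J fun c => M a c * invD M g c b]
    have : ∀ c : {x // x ∈ J}, M a c.val * invD M g c.val b
        = blk M J J ⟨a, ha⟩ c * ((blk M J J)⁻¹) c ⟨b, hb⟩ := by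
      intro c
      have hc : g c.val = g b := mem_fold.mp c.2
      have h1 : invD M g c.val b = ((blk M J J)⁻¹) c ⟨b, hb⟩ := by
        rw [invD, dif_pos hc]
        exact blkinv_congr M (by rw [hc]) _ _ _ _
      rw [h1]; rfl
    rw [Finset.sum_congr rfl fun c _ => this c]
    have := congrFun (congrFun hmul ⟨a, ha⟩) ⟨b, hb⟩
    rw [mul_apply, Finset.univ_eq_attach] at this
    rw [this, one_apply, one_apply]
    by_cases h : a = b
    · subst h; simp
    · rw [if_neg h, if_neg (fun hh : (⟨a, ha⟩ : {x // x ∈ J}) = ⟨b, hb⟩ =>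
        h (congrArg Subtype.val hh))]
  · rw [one_apply_ne (fun h => hab (by rw [h]))]
    apply Finset.sum_eq_zero
    intro c hc
    rw [hblk a c (fun h => hab (h.trans (mem_fold.mp hc))), zero_mul]

/-- Equivalence between: (a) the off-diagonal blocks of `K⁻¹` across folds vanish,
(b) `D = K`, and (c) the off-diagonal blocks of `K` across folds vanish. -/
theorem blockIndependence_tfae {n q : ℕ}
    (K : Matrix (Fin n) (Fin n) ℝ) (hK : K.PosDef) (g : Fin n → Fin q) :
    ((∀ a b, g a ≠ g b → K⁻¹ a b = 0) ↔ blockD K g = K) ∧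
      (blockD K g = K ↔ (∀ a b, g a ≠ g b → K a b = 0)) := by
  have hab : (∀ a b, g a ≠ g b → K⁻¹ a b = 0) → blockD K g = K := by
    intro ha
    rw [blockD_eq_invD, ← inv_eq_invD hK.inv g ha]
    exact nonsing_inv_nonsing_inv K (isUnit_iff_ne_zero.mpr hK.det_pos.ne')
  have hbc : blockD K g = K → (∀ a b, g a ≠ g b → K a b = 0) := by
    intro hb a b h
    rw [← hb, blockD, dif_neg h]
  have hca : (∀ a b, g a ≠ g b → K a b = 0) → (∀ a b, g a ≠ g b → K⁻¹ a b = 0) := by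
    intro hc a b h
    rw [inv_eq_invD hK g hc, invD, dif_neg h]
  exact ⟨⟨hab, fun hb => hca (hbc hb)⟩, ⟨hbc, fun hc => hab (hca hc)⟩⟩
end

section
/- For any n×n symmetric positive definite matrix R, tr((R⁻¹ diag(R⁻¹)⁻¹)²) ≥ n, with equality if and only if R⁻¹ diag(R⁻¹)⁻¹ has all off-diagonal entries equal to zero (equivalently, R is diagonal). Consequently Var(σ̂²_LOO) ≥ Var(σ̂²_ML) = 2σ⁴/n. -/
open Matrix

private lemma posdef_diag_pos {n : ℕ} {M : Matrix (Fin n) (Fin n) ℝ} (hM : M.PosDef)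
    (i : Fin n) : 0 < M i i := by
  have h := hM.dotProduct_mulVec_pos (x := Pi.single i 1) (by simp [funext_iff]; exact ⟨i, by simp⟩)
  simpa using h

/-- `tr((R⁻¹ diag(R⁻¹)⁻¹)²) ≥ n`, with equality iff `R` is diagonal; consequently the
variance `2σ⁴/n² · tr((R⁻¹ diag(R⁻¹)⁻¹)²)` of the LOO scale estimator is at least the
variance `2σ⁴/n` of the MLE. -/
theorem trace_loo_ge {n : ℕ} (hn : 0 < n)
    (R : Matrix (Fin n) (Fin n) ℝ) (hR : R.PosDef) :
    (n : ℝ) ≤ ((R⁻¹ * (Matrix.diagonal fun a => R⁻¹ a a)⁻¹) *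
        (R⁻¹ * (Matrix.diagonal fun a => R⁻¹ a a)⁻¹)).trace ∧
    (((R⁻¹ * (Matrix.diagonal fun a => R⁻¹ a a)⁻¹) *
        (R⁻¹ * (Matrix.diagonal fun a => R⁻¹ a a)⁻¹)).trace = (n : ℝ) ↔
      ∀ a b, a ≠ b → R a b = 0) ∧
    (∀ σ : ℝ, 0 < σ →
      2 * σ ^ 4 / (n : ℝ) ≤
        2 * σ ^ 4 / (n : ℝ) ^ 2 *
          ((R⁻¹ * (Matrix.diagonal fun a => R⁻¹ a a)⁻¹) *
            (R⁻¹ * (Matrix.diagonal fun a => R⁻¹ a a)⁻¹)).trace) := by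
  set M := R⁻¹ with hMdef
  have hM : M.PosDef := hR.inv
  have hdpos : ∀ i, 0 < M i i := posdef_diag_pos hM
  have hdne : ∀ i, M i i ≠ 0 := fun i => (hdpos i).ne'
  have hsym : ∀ i j, M j i = M i j := by
    intro i j
    have := hM.1
    rw [Matrix.IsHermitian] at this
    conv_lhs => rw [← this]
    simp [Matrix.conjTranspose_apply]
  -- diagonal inverse
  have hdiaginv : (Matrix.diagonal fun a => M a a)⁻¹ = Matrix.diagonal (fun a => (M a a)⁻¹) := by
    apply Matrix.inv_eq_right_inv
    rw [Matrix.diagonal_mul_diagonal]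
    rw [show (fun i => M i i * (M i i)⁻¹) = fun _ => (1:ℝ) from
      funext fun a => mul_inv_cancel₀ (hdne a)]
    exact Matrix.diagonal_one
  set A := M * (Matrix.diagonal fun a => M a a)⁻¹ with hAdef
  have hA : ∀ i j, A i j = M i j * (M j j)⁻¹ := by
    intro i j
    rw [hAdef, hdiaginv, Matrix.mul_diagonal]
  -- trace formula
  have htr : (A * A).trace =
      ∑ i, ∑ j, (M i j)^2 * ((M i i)⁻¹ * (M j j)⁻¹) := by
    rw [Matrix.trace]
    apply Finset.sum_congr rfl
    intro i _
    rw [Matrix.diag_apply, Matrix.mul_apply]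
    apply Finset.sum_congr rfl
    intro j _
    rw [hA, hA, hsym i j]
    ring
  have hdiagterm : ∀ i : Fin n, (M i i)^2 * ((M i i)⁻¹ * (M i i)⁻¹) = 1 := by
    intro i; have h := hdne i; rw [sq]; field_simp
  have hsplit : (A * A).trace = (n : ℝ) +
      ∑ i, ∑ j ∈ Finset.univ.erase i, (M i j)^2 * ((M i i)⁻¹ * (M j j)⁻¹) := by
    rw [htr]
    have : ∀ i : Fin n, ∑ j, (M i j)^2 * ((M i i)⁻¹ * (M j j)⁻¹)
        = 1 + ∑ j ∈ Finset.univ.erase i, (M i j)^2 * ((M i i)⁻¹ * (M j j)⁻¹) := by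
      intro i
      rw [← Finset.add_sum_erase _ _ (Finset.mem_univ i), hdiagterm i]
    simp only [this, Finset.sum_add_distrib, Finset.sum_const, Finset.card_univ,
      Fintype.card_fin, nsmul_eq_mul, mul_one]
  have hSnonneg : 0 ≤ ∑ i, ∑ j ∈ Finset.univ.erase i,
      (M i j)^2 * ((M i i)⁻¹ * (M j j)⁻¹) := by
    apply Finset.sum_nonneg; intro i _
    apply Finset.sum_nonneg; intro j _
    have h1 := hdpos i; have h2 := hdpos j; positivity
  have hge : (n : ℝ) ≤ (A * A).trace := by rw [hsplit]; linarith
  have hRdet : IsUnit R.det := isUnit_iff_ne_zero.mpr hR.det_pos.ne'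
  refine ⟨hge, ⟨?_, ?_⟩, ?_⟩
  · -- equality → R diagonal
    intro heq a b hab
    have hS0 : ∑ i, ∑ j ∈ Finset.univ.erase i,
        (M i j)^2 * ((M i i)⁻¹ * (M j j)⁻¹) = 0 := by
      rw [hsplit] at heq; linarith
    have hM0 : ∀ i j, i ≠ j → M i j = 0 := by
      intro i j hij
      have h1 := (Finset.sum_eq_zero_iff_of_nonneg (fun i _ =>
        Finset.sum_nonneg (fun j _ => by
          have h1 := hdpos i; have h2 := hdpos j; positivity))).mp hS0 i (Finset.mem_univ i)
      have h2 := (Finset.sum_eq_zero_iff_of_nonneg (fun j _ => by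
          have h1 := hdpos i; have h2 := hdpos j; positivity)).mp h1 j
        (Finset.mem_erase.mpr ⟨hij.symm, Finset.mem_univ j⟩)
      have hpos : 0 < (M i i)⁻¹ * (M j j)⁻¹ := by
        have h1 := hdpos i; have h2 := hdpos j; positivity
      have : (M i j)^2 = 0 := by
        by_contra h
        exact h (by nlinarith [sq_nonneg (M i j)])
      exact pow_eq_zero_iff (by norm_num) |>.mp this
    have hMd : M = Matrix.diagonal (fun i => M i i) := by
      ext i j
      by_cases h : i = j
      · subst h; simp
      · rw [Matrix.diagonal_apply_ne _ h]; exact hM0 i j h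
    have hR' : R = M⁻¹ := by rw [hMdef, Matrix.nonsing_inv_nonsing_inv _ hRdet]
    rw [hR', hMd, Matrix.inv_diagonal]
    exact Matrix.diagonal_apply_ne _ hab
  · -- R diagonal → equality
    intro h
    have hRd : R = Matrix.diagonal (fun i => R i i) := by
      ext i j
      by_cases hij : i = j
      · subst hij; simp
      · rw [Matrix.diagonal_apply_ne _ hij]; exact h i j hij
    have hM0 : ∀ i j, i ≠ j → M i j = 0 := by
      intro i j hij
      rw [hMdef]
      conv_lhs => rw [hRd]
      rw [Matrix.inv_diagonal]
      exact Matrix.diagonal_apply_ne _ hij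
    rw [hsplit]
    have : ∑ i, ∑ j ∈ Finset.univ.erase i,
        (M i j)^2 * ((M i i)⁻¹ * (M j j)⁻¹) = 0 := by
      apply Finset.sum_eq_zero; intro i _
      apply Finset.sum_eq_zero; intro j hj
      rw [hM0 i j (Finset.ne_of_mem_erase hj).symm]
      ring
    rw [this, add_zero]
  · -- variance inequality
    intro σ hσ
    have hn' : (0:ℝ) < n := by exact_mod_cast hn
    have hc : (0:ℝ) < 2 * σ ^ 4 / (n:ℝ)^2 := by positivity
    have key : 2 * σ ^ 4 / (n : ℝ) = 2 * σ ^ 4 / (n : ℝ) ^ 2 * (n : ℝ) := by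
      field_simp
    rw [key]
    exact mul_le_mul_of_nonneg_left hge hc.le
end
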